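/- arXiv:1612.06150 — 3 statements merged into one kernel-verified Lean document; each statement's English description precedes it below -/
import Mathlib

section
/- A ring homomorphism \phi: F_2[x_1,...,x_n] \to F_2[x_1,...,x_m] preserves neural ideals if and only if \phi is surjective and for every pseudomonomial f in F_2[x_1,...,x_n], the image \phi(f) is either a pseudomonomial or zero. -/
open MvPolynomial

/-- The pseudomonomial with positive part `σ` and negative part `τ`. -/
noncomputable def pm {n : ℕ} (σ τ : Finset (Fin n)) : MvPolynomial (Fin n) (ZMod 2) :=
  (∏ i ∈ σ, X i) * ∏ j ∈ τ, (1 - X j)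

/-- A polynomial is a pseudomonomial if it is `pm σ τ` for disjoint `σ τ`. -/
def IsPseudomonomial {n : ℕ} (f : MvPolynomial (Fin n) (ZMod 2)) : Prop :=
  ∃ σ τ : Finset (Fin n), Disjoint σ τ ∧ f = pm σ τ

/-- The indicator pseudomonomial `ρ_v` of a vector `v ∈ F₂ⁿ`. -/
noncomputable def indicatorPM {n : ℕ} (v : Fin n → ZMod 2) : MvPolynomial (Fin n) (ZMod 2) :=
  pm (Finset.univ.filter fun i => v i = 1) (Finset.univ.filter fun i => ¬ v i = 1)

/-- The neural ideal of a code `C ⊆ F₂ⁿ`. -/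
noncomputable def neuralIdeal {n : ℕ} (C : Set (Fin n → ZMod 2)) :
    Ideal (MvPolynomial (Fin n) (ZMod 2)) :=
  Ideal.span (indicatorPM '' {v | v ∉ C})

/-- A ring homomorphism preserves neural ideals if the image of every neural ideal
is a neural ideal. -/
def PreservesNeuralIdeals {n m : ℕ}
    (φ : MvPolynomial (Fin n) (ZMod 2) →+* MvPolynomial (Fin m) (ZMod 2)) : Prop :=
  ∀ C : Set (Fin n → ZMod 2), ∃ D : Set (Fin m → ZMod 2),
    φ '' (neuralIdeal C : Set (MvPolynomial (Fin n) (ZMod 2))) =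
      (neuralIdeal D : Set (MvPolynomial (Fin m) (ZMod 2)))

/-- The bit flip homomorphism `δ_i`. -/
noncomputable def bitFlip {n : ℕ} (i : Fin n) :
    MvPolynomial (Fin n) (ZMod 2) →ₐ[ZMod 2] MvPolynomial (Fin n) (ZMod 2) :=
  aeval (fun j => if j = i then 1 - X j else X j)

/-- The restriction map `ω_{m,m'} : F₂[x₁,…,xₙ] → F₂[x₁,…,x_m]`. -/
noncomputable def restrictionMap (n m m' : ℕ) :
    MvPolynomial (Fin n) (ZMod 2) →ₐ[ZMod 2] MvPolynomial (Fin m) (ZMod 2) :=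
  aeval (fun i : Fin n => if h : (i : ℕ) < m then X (⟨i, h⟩ : Fin m)
    else if (i : ℕ) < m' then 0 else 1)

/-!
A pseudomonomial `pm σ τ` is the sum of the `ρ_v` over the points `v` where it takes the value
`1`, so it lies in `J_D` as soon as it vanishes on `D`; if it does not vanish at `v`, it divides
`ρ_v`. Hence an ideal generated by pseudomonomials is the neural ideal of its zero locus. For
surjective `φ`, `φ(J_C)` is generated by the `φ(ρ_v)`, which gives one direction.

Conversely, `J_∅ = (1)` forces `φ` to be surjective, and for a pseudomonomial `f` the ideal
`(φ f)` is some `J_D`; if `φ f ≠ 0` it contains some `ρ_v`. Since `ρ_v` is a product of the primes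
`x_i`, `1 - x_i` and `1` is the only unit of `F₂[x]`, every divisor of `ρ_v` is a pseudomonomial.
-/
lemma zmod_two_eq_one_of_ne_zero {a : ZMod 2} (ha : a ≠ 0) : a = 1 := by
  revert a; decide

instance MvPolynomial.subsingleton_units {σ R : Type*} [CommRing R] [IsReduced R]
    [Subsingleton Rˣ] : Subsingleton (MvPolynomial σ R)ˣ :=
  Subsingleton.units_of_isUnit fun P hP => by
    obtain ⟨r, hr, rfl⟩ := isUnit_iff_eq_C_of_isReduced.mp hP
    rw [hr.eq_one, C_1]

theorem exists_subset_associated_prod_of_dvd_prod {M : Type*} [CommMonoidWithZero M]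
    [IsCancelMulZero M] {ι : Type*} [DecidableEq ι] {p : ι → M} (hp : ∀ i, Prime (p i))
    (s : Finset ι) {g : M} (hg : g ∣ ∏ i ∈ s, p i) :
    ∃ t ⊆ s, Associated g (∏ i ∈ t, p i) := by
  induction s using Finset.induction_on generalizing g with
  | empty =>
    exact ⟨∅, subset_rfl, associated_one_iff_isUnit.mpr (isUnit_of_dvd_one (by simpa using hg))⟩
  | @insert a s ha ih =>
    obtain ⟨h, hgh⟩ := hg
    rw [Finset.prod_insert ha] at hgh
    rcases (hp a).dvd_or_dvd ⟨_, hgh.symm⟩ with ⟨g', rfl⟩ | ⟨h', rfl⟩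
    · obtain ⟨t, hts, hg'⟩ :=
        ih (g := g') ⟨h, mul_left_cancel₀ (hp a).ne_zero (by rw [← mul_assoc, ← hgh])⟩
      refine ⟨insert a t, Finset.insert_subset_insert a hts, ?_⟩
      rw [Finset.prod_insert fun hat => ha (hts hat)]
      exact hg'.mul_left (p a)
    · obtain ⟨t, hts, hg'⟩ :=
        ih (g := g) ⟨h', mul_left_cancel₀ (hp a).ne_zero (by rw [hgh, mul_left_comm])⟩
      exact ⟨t, hts.trans (Finset.subset_insert a s), hg'⟩

section

variable {n : ℕ}

lemma eval_pm (v : Fin n → ZMod 2) (σ τ : Finset (Fin n)) :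
    eval v (pm σ τ) = (∏ i ∈ σ, v i) * ∏ j ∈ τ, (1 - v j) := by
  simp [pm]

lemma pm_dvd_pm {σ τ σ' τ' : Finset (Fin n)} (hσ : σ ⊆ σ') (hτ : τ ⊆ τ') :
    pm σ τ ∣ pm σ' τ' :=
  mul_dvd_mul (Finset.prod_dvd_prod_of_subset _ _ _ hσ) (Finset.prod_dvd_prod_of_subset _ _ _ hτ)

noncomputable def indicatorFactor (v : Fin n → ZMod 2) (i : Fin n) :
    MvPolynomial (Fin n) (ZMod 2) :=
  if v i = 1 then X i else 1 - X i

lemma prod_indicatorFactor (v : Fin n → ZMod 2) (t : Finset (Fin n)) :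
    ∏ i ∈ t, indicatorFactor v i = pm (t.filter fun i => v i = 1) (t.filter fun i => ¬ v i = 1) :=
  Finset.prod_ite _ _

lemma indicatorPM_eq_prod_indicatorFactor (v : Fin n → ZMod 2) :
    indicatorPM v = ∏ i, indicatorFactor v i :=
  (prod_indicatorFactor v _).symm

lemma isPseudomonomial_prod_indicatorFactor (v : Fin n → ZMod 2) (t : Finset (Fin n)) :
    IsPseudomonomial (∏ i ∈ t, indicatorFactor v i) :=
  ⟨_, _, Finset.disjoint_filter_filter_not t t _, prod_indicatorFactor v t⟩

lemma isPseudomonomial_indicatorPM (v : Fin n → ZMod 2) : IsPseudomonomial (indicatorPM v) :=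
  indicatorPM_eq_prod_indicatorFactor v ▸ isPseudomonomial_prod_indicatorFactor v _

lemma bitFlip_X (i j : Fin n) : bitFlip i (X j) = if j = i then 1 - X j else X j := by
  simp [bitFlip]

lemma bitFlip_comp_bitFlip (i : Fin n) :
    (bitFlip i).comp (bitFlip i) = AlgHom.id (ZMod 2) _ := by
  ext j : 1
  by_cases h : j = i <;> simp [bitFlip_X, h]

noncomputable def bitFlipEquiv (i : Fin n) :
    MvPolynomial (Fin n) (ZMod 2) ≃ₐ[ZMod 2] MvPolynomial (Fin n) (ZMod 2) :=
  AlgEquiv.ofAlgHom (bitFlip i) (bitFlip i) (bitFlip_comp_bitFlip i) (bitFlip_comp_bitFlip i)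

lemma prime_one_sub_X (i : Fin n) : Prime (1 - X i : MvPolynomial (Fin n) (ZMod 2)) := by
  have : bitFlipEquiv i (X i) = 1 - X i := by simp [bitFlipEquiv, bitFlip_X]
  exact this ▸ (MulEquiv.prime_iff (bitFlipEquiv i).toMulEquiv).mpr X_prime

lemma prime_indicatorFactor (v : Fin n → ZMod 2) (i : Fin n) : Prime (indicatorFactor v i) := by
  unfold indicatorFactor
  split_ifs
  exacts [X_prime, prime_one_sub_X i]

lemma isPseudomonomial_of_dvd_indicatorPM {v : Fin n → ZMod 2}
    {g : MvPolynomial (Fin n) (ZMod 2)} (hg : g ∣ indicatorPM v) : IsPseudomonomial g := by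
  rw [indicatorPM_eq_prod_indicatorFactor] at hg
  obtain ⟨t, -, hgt⟩ := exists_subset_associated_prod_of_dvd_prod (prime_indicatorFactor v) _ hg
  exact associated_iff_eq.mp hgt ▸ isPseudomonomial_prod_indicatorFactor v t

lemma subset_of_eval_pm_ne_zero {v : Fin n → ZMod 2} {σ τ : Finset (Fin n)}
    (hv : eval v (pm σ τ) ≠ 0) :
    σ ⊆ Finset.univ.filter (fun i => v i = 1) ∧
      τ ⊆ Finset.univ.filter (fun i => ¬ v i = 1) := by
  rw [eval_pm, mul_ne_zero_iff, Finset.prod_ne_zero_iff, Finset.prod_ne_zero_iff] at hv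
  refine ⟨fun i hi => ?_, fun j hj => ?_⟩ <;>
    simp only [Finset.mem_filter, Finset.mem_univ, true_and]
  · exact zmod_two_eq_one_of_ne_zero (hv.1 i hi)
  · exact fun h => hv.2 j hj (by rw [h, sub_self])

lemma pm_dvd_indicatorPM_of_eval_ne_zero {v : Fin n → ZMod 2} {σ τ : Finset (Fin n)}
    (hv : eval v (pm σ τ) ≠ 0) : pm σ τ ∣ indicatorPM v :=
  pm_dvd_pm (subset_of_eval_pm_ne_zero hv).1 (subset_of_eval_pm_ne_zero hv).2

/-- `Fintype.piFinset (pmPattern σ τ)` is the set of points where `pm σ τ` takes the value `1`. -/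
def pmPattern (σ τ : Finset (Fin n)) (i : Fin n) : Finset (ZMod 2) :=
  if i ∈ σ then {1} else if i ∈ τ then {0} else Finset.univ

lemma eval_pm_of_mem_piFinset {σ τ : Finset (Fin n)} (hστ : Disjoint σ τ) {v : Fin n → ZMod 2}
    (hv : v ∈ Fintype.piFinset (pmPattern σ τ)) : eval v (pm σ τ) = 1 := by
  rw [Fintype.mem_piFinset] at hv
  rw [eval_pm, Finset.prod_eq_one, Finset.prod_eq_one, one_mul]
  · intro j hj
    have hvj : v j = 0 := by simpa [pmPattern, Finset.disjoint_right.mp hστ hj, hj] using hv j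
    rw [hvj, sub_zero]
  · intro i hi
    simpa [pmPattern, hi] using hv i

lemma pm_eq_sum_indicatorPM {σ τ : Finset (Fin n)} (hστ : Disjoint σ τ) :
    pm σ τ = ∑ v ∈ Fintype.piFinset (pmPattern σ τ), indicatorPM v := by
  have hsum : ∀ i, ∑ a ∈ pmPattern σ τ i,
      (if a = 1 then X i else 1 - X i : MvPolynomial (Fin n) (ZMod 2)) =
        (if i ∈ σ then X i else 1) * (if i ∈ τ then 1 - X i else 1) := by
    intro i
    by_cases hσ : i ∈ σ
    · simp [pmPattern, hσ, Finset.disjoint_left.mp hστ hσ]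
    · by_cases hτ : i ∈ τ
      · simp [pmPattern, hσ, hτ]
      · have huniv : (Finset.univ : Finset (ZMod 2)) = {0, 1} := rfl
        simp [pmPattern, hσ, hτ, huniv]
  calc pm σ τ = ∏ i, (if i ∈ σ then X i else 1) * (if i ∈ τ then 1 - X i else 1) := by
        rw [Finset.prod_mul_distrib, Finset.prod_ite_mem, Finset.prod_ite_mem, Finset.univ_inter,
          Finset.univ_inter, pm]
    _ = ∏ i, ∑ a ∈ pmPattern σ τ i, (if a = 1 then X i else 1 - X i) :=
        Finset.prod_congr rfl fun i _ => (hsum i).symm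
    _ = ∑ v ∈ Fintype.piFinset (pmPattern σ τ), indicatorPM v := by
        simp only [Finset.prod_univ_sum, indicatorPM_eq_prod_indicatorFactor, indicatorFactor]

lemma pm_mem_neuralIdeal {D : Set (Fin n → ZMod 2)} {σ τ : Finset (Fin n)}
    (hστ : Disjoint σ τ) (hD : ∀ v ∈ D, eval v (pm σ τ) = 0) : pm σ τ ∈ neuralIdeal D := by
  rw [pm_eq_sum_indicatorPM hστ]
  refine Ideal.sum_mem _ fun v hv => Ideal.subset_span ⟨v, fun hvD => ?_, rfl⟩
  simpa [eval_pm_of_mem_piFinset hστ hv] using hD v hvD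

lemma neuralIdeal_empty : neuralIdeal (∅ : Set (Fin n → ZMod 2)) = ⊤ := by
  have h : pm (∅ : Finset (Fin n)) ∅ = 1 := by simp [pm]
  rw [Ideal.eq_top_iff_one, ← h]
  exact pm_mem_neuralIdeal (Finset.disjoint_empty_left _) fun v hv => hv.elim

lemma neuralIdeal_univ : neuralIdeal (Set.univ : Set (Fin n → ZMod 2)) = ⊥ := by
  simp [neuralIdeal]

lemma exists_neuralIdeal_eq_span {S : Set (MvPolynomial (Fin n) (ZMod 2))}
    (hS : ∀ g ∈ S, IsPseudomonomial g ∨ g = 0) : ∃ D, neuralIdeal D = Ideal.span S := by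
  refine ⟨zeroLocus (ZMod 2) (Ideal.span S), le_antisymm ?_ ?_⟩
  · rw [neuralIdeal, Ideal.span_le]
    rintro _ ⟨v, hv, rfl⟩
    obtain ⟨g, hgS, hgv⟩ : ∃ g ∈ S, eval v g ≠ 0 := by
      by_contra! h
      exact hv fun p hp => by
        simpa using (Ideal.span_le (I := RingHom.ker (eval v))).mpr h hp
    rcases hS g hgS with ⟨σ, τ, -, rfl⟩ | rfl
    · exact Ideal.mem_of_dvd _ (pm_dvd_indicatorPM_of_eval_ne_zero hgv) (Ideal.subset_span hgS)
    · exact absurd (map_zero _) hgv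
  · rw [Ideal.span_le]
    intro g hgS
    rcases hS g hgS with ⟨σ, τ, hστ, rfl⟩ | rfl
    · exact pm_mem_neuralIdeal hστ fun v hv => by simpa using hv _ (Ideal.subset_span hgS)
    · exact Ideal.zero_mem _

lemma isPseudomonomial_of_span_singleton_eq_neuralIdeal {g : MvPolynomial (Fin n) (ZMod 2)}
    {D : Set (Fin n → ZMod 2)} (hgD : Ideal.span {g} = neuralIdeal D) (hg : g ≠ 0) :
    IsPseudomonomial g := by
  obtain ⟨v, hv⟩ : ∃ v, v ∉ D := by
    by_contra! hD
    rw [Set.eq_univ_of_forall hD, neuralIdeal_univ, Ideal.span_singleton_eq_bot] at hgD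
    exact hg hgD
  have hmem : indicatorPM v ∈ Ideal.span {g} := hgD ▸ Ideal.subset_span ⟨v, hv, rfl⟩
  exact isPseudomonomial_of_dvd_indicatorPM (Ideal.mem_span_singleton.mp hmem)

lemma Ideal.coe_map_eq_image_of_surjective {R S : Type*} [CommRing R] [CommRing S]
    {f : R →+* S} (hf : Function.Surjective f) (I : Ideal R) : (I.map f : Set S) = f '' I :=
  Set.ext fun _ => Ideal.mem_map_iff_of_surjective f hf

variable {m : ℕ} {φ : MvPolynomial (Fin n) (ZMod 2) →+* MvPolynomial (Fin m) (ZMod 2)}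

lemma PreservesNeuralIdeals.surjective (hφ : PreservesNeuralIdeals φ) :
    Function.Surjective φ := by
  obtain ⟨D, hD⟩ := hφ ∅
  rw [neuralIdeal_empty, Submodule.top_coe, Set.image_univ] at hD
  have hD_top : neuralIdeal D = ⊤ := by
    rw [Ideal.eq_top_iff_one, ← SetLike.mem_coe, ← hD]
    exact ⟨1, map_one φ⟩
  rw [hD_top, Submodule.top_coe] at hD
  exact Set.range_eq_univ.mp hD

lemma PreservesNeuralIdeals.isPseudomonomial_map (hφ : PreservesNeuralIdeals φ)
    {f : MvPolynomial (Fin n) (ZMod 2)} (hf : IsPseudomonomial f) (hφf : φ f ≠ 0) :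
    IsPseudomonomial (φ f) := by
  obtain ⟨C, hC⟩ := exists_neuralIdeal_eq_span (S := {f}) (by simp [hf])
  obtain ⟨D, hD⟩ := hφ C
  rw [hC, ← Ideal.coe_map_eq_image_of_surjective hφ.surjective, Ideal.map_span,
    Set.image_singleton] at hD
  exact isPseudomonomial_of_span_singleton_eq_neuralIdeal (SetLike.coe_injective hD) hφf

end

theorem preserves_iff_surjective_and_pseudo {n m : ℕ}
    (φ : MvPolynomial (Fin n) (ZMod 2) →+* MvPolynomial (Fin m) (ZMod 2)) :
    PreservesNeuralIdeals φ ↔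
      Function.Surjective φ ∧
        ∀ f, IsPseudomonomial f → IsPseudomonomial (φ f) ∨ φ f = 0 := by
  refine ⟨fun hφ => ⟨hφ.surjective, fun f hf => ?_⟩, fun ⟨hsurj, hpm⟩ C => ?_⟩
  · exact or_iff_not_imp_right.mpr (hφ.isPseudomonomial_map hf)
  · obtain ⟨D, hD⟩ := exists_neuralIdeal_eq_span (S := φ '' (indicatorPM '' {v | v ∉ C}))
      (by rintro _ ⟨_, ⟨v, -, rfl⟩, rfl⟩; exact hpm _ (isPseudomonomial_indicatorPM v))
    refine ⟨D, ?_⟩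
    rw [hD, ← Ideal.map_span, ← Ideal.coe_map_eq_image_of_surjective hsurj, neuralIdeal]
end

section
/- For any permutation \lambda of [n] and any code C \subseteq F_2^n, the image of the neural ideal under the permutation map equals the neural ideal of the permuted code: \lambda(J_C) = J_{\lambda(C)}. -/
open MvPolynomial

/-- The permutation of a code by `lam`: `u ∈ lam(C)` iff `supp u = lam (supp c)`
for some `c ∈ C`, i.e. `u (lam i) = c i` for all `i`. -/
def permCode {n : ℕ} (lam : Equiv.Perm (Fin n)) (C : Set (Fin n → ZMod 2)) :
    Set (Fin n → ZMod 2) :=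
  {u | ∃ c ∈ C, ∀ i, u (lam i) = c i}

lemma rename_indicatorPM {n : ℕ} (lam : Equiv.Perm (Fin n)) (v : Fin n → ZMod 2) :
    rename (R := ZMod 2) (fun i : Fin n => lam i) (indicatorPM v)
      = indicatorPM (fun j => v (lam.symm j)) := by
  have himg : ∀ p : Fin n → Prop, [DecidablePred p] →
      (Finset.univ.filter p).image (fun i => lam i)
        = Finset.univ.filter (fun j => p (lam.symm j)) := by
    intro p _
    ext j
    simp only [Finset.mem_image, Finset.mem_filter, Finset.mem_univ, true_and]
    constructor
    · rintro ⟨i, hi, rfl⟩; simpa using hi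
    · intro h; exact ⟨lam.symm j, h, by simp⟩
  have h1 := Finset.prod_image (s := Finset.univ.filter fun i => v i = 1)
      (g := fun i : Fin n => (lam i : Fin n)) (f := fun j : Fin n => X (R := ZMod 2) j)
      (fun a _ b _ h => lam.injective h)
  have h2 := Finset.prod_image (s := Finset.univ.filter fun i => ¬ v i = 1)
      (g := fun i : Fin n => (lam i : Fin n))
      (f := fun j : Fin n => 1 - X (R := ZMod 2) j)
      (fun a _ b _ h => lam.injective h)
  rw [himg] at h1 h2
  simp only [indicatorPM, pm, map_mul, map_prod, map_sub, map_one, rename_X]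
  rw [← h1, ← h2]

lemma image_ideal_span {k R S : Type*} [CommSemiring k] [CommRing R] [CommRing S]
    [Algebra k R] [Algebra k S]
    (f : R →ₐ[k] S) (hf : Function.Surjective f) (s : Set R) :
    ⇑f '' (Ideal.span s : Set R) = (Ideal.span (⇑f '' s) : Set S) := by
  ext y
  constructor
  · rintro ⟨x, hx, rfl⟩
    rw [← Ideal.map_span f]
    exact Ideal.mem_map_of_mem f hx
  · intro hy
    rw [← Ideal.map_span f] at hy
    obtain ⟨x, hx, rfl⟩ := (Ideal.mem_map_iff_of_surjective f hf).1 hy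
    exact ⟨x, hx, rfl⟩

theorem permutationMap_neuralIdeal {n : ℕ} (lam : Equiv.Perm (Fin n))
    (C : Set (Fin n → ZMod 2)) :
    (rename (R := ZMod 2) (fun i : Fin n => lam i)) ''
        (neuralIdeal C : Set (MvPolynomial (Fin n) (ZMod 2))) =
      (neuralIdeal (permCode lam C) : Set (MvPolynomial (Fin n) (ZMod 2))) := by
  unfold neuralIdeal
  have hsurj : Function.Surjective (rename (R := ZMod 2) (fun i : Fin n => lam i)) :=
    fun y => ⟨rename (fun i => lam.symm i) y, by rw [rename_rename]; simp [Function.comp]⟩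
  rw [image_ideal_span _ hsurj]
  have hgen : (⇑(rename (R := ZMod 2) fun i : Fin n => lam i)) '' (indicatorPM '' {v | v ∉ C})
      = indicatorPM '' {v | v ∉ permCode lam C} := by
    rw [← Set.image_comp]
    ext f
    simp only [Set.mem_image, Function.comp_apply, Set.mem_setOf_eq]
    constructor
    · rintro ⟨v, hv, rfl⟩
      refine ⟨fun j => v (lam.symm j), ?_, (rename_indicatorPM lam v).symm⟩
      rintro ⟨c, hc, hcall⟩
      apply hv
      have : v = c := by
        funext i
        have := hcall i
        simpa using this
      rwa [this]
    · rintro ⟨u, hu, rfl⟩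
      refine ⟨fun i => u (lam i), ?_, ?_⟩
      · intro h
        exact hu ⟨fun i => u (lam i), h, fun i => rfl⟩
      · rw [rename_indicatorPM lam]
        congr 1
        funext j
        simp
  rw [hgen]
end

section
/- For 1 \le m \le m' \le n and any code C\subseteq F_2^n, the restriction map satisfies \omega_{m,m'}(J_C) = J_{rest(C,m,m')}. -/
open MvPolynomial

/-- The restriction of a code `C ⊆ F₂ⁿ` to `(m, m')`: `u` is in the restriction iff
the vector extending `u` by zeros on `(m, m']` and ones on `(m', n]` lies in `C`. -/
def restCode (n m m' : ℕ) (C : Set (Fin n → ZMod 2)) : Set (Fin m → ZMod 2) :=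
  {u | ∃ c ∈ C, ∀ i : Fin n,
    c i = if h : (i : ℕ) < m then u ⟨i, h⟩ else if (i : ℕ) < m' then 0 else 1}


def extVec (n m m' : ℕ) (u : Fin m → ZMod 2) : Fin n → ZMod 2 :=
  fun i => if h : (i : ℕ) < m then u ⟨i, h⟩ else if (i : ℕ) < m' then 0 else 1

lemma mem_restCode_iff {n m m' : ℕ} (C : Set (Fin n → ZMod 2)) (u : Fin m → ZMod 2) :
    u ∈ restCode n m m' C ↔ extVec n m m' u ∈ C := by
  constructor
  · rintro ⟨c, hc, hcc⟩
    have : c = extVec n m m' u := funext hcc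
    rwa [this] at hc
  · intro h
    exact ⟨_, h, fun i => rfl⟩

lemma zmod2_cases : ∀ a : ZMod 2, a = 0 ∨ a = 1 := by decide

lemma indicatorPM_eq_prod {n : ℕ} (v : Fin n → ZMod 2) :
    indicatorPM v = ∏ i : Fin n, (if v i = 1 then X i else 1 - X i) := by
  rw [indicatorPM, pm,
    ← Finset.prod_filter_mul_prod_filter_not Finset.univ (fun i => v i = 1)]
  congr 1
  · exact Finset.prod_congr rfl fun i hi => by
      simp only [Finset.mem_filter] at hi; simp [hi.2]
  · exact Finset.prod_congr rfl fun i hi => by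
      simp only [Finset.mem_filter] at hi; simp [hi.2]

lemma phi_factor {n m m' : ℕ} (v : Fin n → ZMod 2) (i : Fin n) :
    restrictionMap n m m' (if v i = 1 then X i else 1 - X i) =
      if h : (i:ℕ) < m then (if v i = 1 then X (⟨i,h⟩:Fin m) else 1 - X ⟨i,h⟩)
      else if (i:ℕ) < m' then (if v i = 1 then 0 else 1)
      else (if v i = 1 then 1 else 0) := by
  rw [apply_ite (restrictionMap n m m'), map_sub, map_one, restrictionMap, aeval_X]
  by_cases h : (i:ℕ) < m
  · simp [h]
  · by_cases h' : (i:ℕ) < m'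
    · simp [h, h']
    · simp [h, h']

lemma phi_ind_ext {n m m' : ℕ} (h1 : m ≤ m') (h2 : m' ≤ n) (u : Fin m → ZMod 2) :
    restrictionMap n m m' (indicatorPM (extVec n m m' u)) = indicatorPM u := by
  have hmn : m ≤ n := h1.trans h2
  rw [indicatorPM_eq_prod, map_prod, indicatorPM_eq_prod]
  rw [← Finset.prod_subset
      (Finset.subset_univ (Finset.univ.filter fun i : Fin n => (i:ℕ) < m)) ?_]
  · refine (Finset.prod_nbij (fun j : Fin m => Fin.castLE hmn j) ?_ ?_ ?_ ?_).symm
    · intro j _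
      simp [Fin.castLE, j.isLt]
    · intro a _ b _ hab
      exact Fin.castLE_injective hmn hab
    · intro i hi
      simp only [Finset.coe_filter, Set.mem_setOf_eq, Finset.mem_univ, true_and] at hi
      exact ⟨⟨(i:ℕ), hi⟩, by simp, by ext; simp [Fin.castLE]⟩
    · intro j _
      rw [phi_factor]
      have hj : ((Fin.castLE hmn j : Fin n) : ℕ) < m := j.isLt
      rw [dif_pos hj]
      have : extVec n m m' u (Fin.castLE hmn j) = u j := by
        simp [extVec, hj, Fin.castLE]
      rw [this]
      rfl
  · intro i _ hi
    simp only [Finset.mem_filter, Finset.mem_univ, true_and, not_lt] at hi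
    rw [phi_factor, dif_neg (not_lt.mpr hi)]
    by_cases h' : (i:ℕ) < m'
    · rw [if_pos h']
      have : extVec n m m' u i = 0 := by simp [extVec, not_lt.mpr hi, h']
      simp [this]
    · rw [if_neg h']
      have : extVec n m m' u i = 1 := by simp [extVec, not_lt.mpr hi, h']
      simp [this]

lemma phi_ind_zero {n m m' : ℕ} (hmn : m ≤ n) (v : Fin n → ZMod 2)
    (hv : v ≠ extVec n m m' (fun j => v (Fin.castLE hmn j))) :
    restrictionMap n m m' (indicatorPM v) = 0 := by
  rw [indicatorPM_eq_prod, map_prod]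
  have : ∃ i : Fin n, v i ≠ extVec n m m' (fun j => v (Fin.castLE hmn j)) i := by
    by_contra h
    push_neg at h
    exact hv (funext h)
  obtain ⟨i, hi⟩ := this
  by_cases h : (i:ℕ) < m
  · exfalso
    apply hi
    simp only [extVec, dif_pos h]
    rfl
  · refine Finset.prod_eq_zero (Finset.mem_univ i) ?_
    rw [phi_factor, dif_neg h]
    by_cases h' : (i:ℕ) < m'
    · have hv1 : v i = 1 := by
        rcases zmod2_cases (v i) with h0 | h0
        · exfalso; apply hi; rw [h0]; simp [extVec, h, h']
        · exact h0
      simp [h', hv1]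
    · have hv0 : v i = 0 := by
        rcases zmod2_cases (v i) with h0 | h0
        · exact h0
        · exfalso; apply hi; rw [h0]; simp [extVec, h, h']
      simp [h', hv0]

lemma restrictionMap_surjective {n m m' : ℕ} (hmn : m ≤ n) :
    Function.Surjective (restrictionMap n m m') := by
  have hcomp : (restrictionMap n m m').comp
      (aeval (fun j : Fin m => (X (Fin.castLE hmn j) : MvPolynomial (Fin n) (ZMod 2))))
        = AlgHom.id _ _ := by
    apply MvPolynomial.algHom_ext
    intro j
    have hj : ((Fin.castLE hmn j : Fin n) : ℕ) < m := j.isLt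
    simp only [AlgHom.comp_apply, aeval_X, restrictionMap, AlgHom.id_apply, dif_pos hj]
    rfl
  intro p
  refine ⟨aeval (fun j : Fin m => (X (Fin.castLE hmn j) : MvPolynomial (Fin n) (ZMod 2))) p, ?_⟩
  have := congrArg (fun f => f p) (congrArg DFunLike.coe hcomp)
  simpa using this

theorem restrictionMap_neuralIdeal {n m m' : ℕ} (hm : 1 ≤ m) (h1 : m ≤ m') (h2 : m' ≤ n)
    (C : Set (Fin n → ZMod 2)) :
    (restrictionMap n m m') '' (neuralIdeal C : Set (MvPolynomial (Fin n) (ZMod 2))) =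
      (neuralIdeal (restCode n m m' C) : Set (MvPolynomial (Fin m) (ZMod 2))) := by
  have hmn : m ≤ n := h1.trans h2
  have hsurj := restrictionMap_surjective (m' := m') hmn
  have hmap : Ideal.map (restrictionMap n m m') (neuralIdeal C)
      = neuralIdeal (restCode n m m' C) := by
    rw [neuralIdeal, neuralIdeal, Ideal.map_span]
    apply le_antisymm
    · rw [Ideal.span_le]
      rintro _ ⟨_, ⟨v, hv, rfl⟩, rfl⟩
      by_cases hve : v = extVec n m m' (fun j => v (Fin.castLE hmn j))
      · rw [hve, phi_ind_ext h1 h2]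
        apply Ideal.subset_span
        refine ⟨_, ?_, rfl⟩
        simp only [Set.mem_setOf_eq, mem_restCode_iff]
        rw [← hve]; exact hv
      · rw [phi_ind_zero hmn v hve]
        exact (Ideal.span _).zero_mem
    · rw [Ideal.span_le]
      rintro _ ⟨u, hu, rfl⟩
      apply Ideal.subset_span
      refine ⟨indicatorPM (extVec n m m' u), ⟨extVec n m m' u, ?_, rfl⟩, ?_⟩
      · simp only [Set.mem_setOf_eq] at hu ⊢
        exact fun h => hu ((mem_restCode_iff C u).mpr h)
      · rw [phi_ind_ext h1 h2]
  ext p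
  constructor
  · rintro ⟨q, hq, rfl⟩
    rw [SetLike.mem_coe, ← hmap]
    exact Ideal.mem_map_of_mem _ hq
  · intro hp
    rw [SetLike.mem_coe, ← hmap] at hp
    obtain ⟨q, hq, rfl⟩ := (Ideal.mem_map_iff_of_surjective _ hsurj).mp hp
    exact ⟨q, hq, rfl⟩
end
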